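/- arXiv:1910.02569 — 5 statements merged into one kernel-verified Lean document; each statement's English description precedes it below -/
import Mathlib

section
/- Define f : ℕ → ℝ by f(0) = f(1) = 1 and f(k) = f(k−1) − (1/16)·f(k−2) for k ≥ 2. For every k ≥ 0, the number of sequences x : Fin k → Fin 4 × Bool such that (a) there is no index t with t+1 < k, (x(t)).1 = 1 and (x(t+1)).1 = 0, and (b) (x(t)).2 = false for every t, equals 4^k · f(k). Equivalently, under the uniform distribution on such sequences this event has probability exactly 2^{−k} · f(k). -/
/-- `f 0 = f 1 = 1` and `f k = f (k-1) - (1/16) f (k-2)` for `k ≥ 2`. -/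
noncomputable def f : ℕ → ℝ
  | 0 => 1
  | 1 => 1
  | (k + 2) => f (k + 1) - (1 / 16) * f k

def NoPat {k : ℕ} (x : Fin k → Fin 4) : Prop :=
  ∀ t : ℕ, ∀ h : t + 1 < k, ¬(x ⟨t, Nat.lt_of_succ_lt h⟩ = 1 ∧ x ⟨t + 1, h⟩ = 0)

lemma snoc_lt {n : ℕ} (w : Fin n → Fin 4) (l : Fin 4) (t : ℕ) (ht : t < n) :
    (Fin.snoc w l : Fin (n+1) → Fin 4) ⟨t, Nat.lt_succ_of_lt ht⟩ = w ⟨t, ht⟩ := by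
  have : (⟨t, Nat.lt_succ_of_lt ht⟩ : Fin (n+1)) = Fin.castSucc ⟨t, ht⟩ := rfl
  rw [this, Fin.snoc_castSucc]

lemma snoc_at_n {n : ℕ} (w : Fin n → Fin 4) (l : Fin 4) :
    (Fin.snoc w l : Fin (n+1) → Fin 4) ⟨n, Nat.lt_succ_self n⟩ = l := by
  have : (⟨n, Nat.lt_succ_self n⟩ : Fin (n+1)) = Fin.last n := rfl
  rw [this, Fin.snoc_last]

lemma noPat_snoc {n : ℕ} (w : Fin n → Fin 4) (l : Fin 4) :
    NoPat (Fin.snoc w l) ↔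
      NoPat w ∧ ∀ hn : 0 < n, ¬(w ⟨n - 1, Nat.sub_lt hn one_pos⟩ = 1 ∧ l = 0) := by
  constructor
  · intro h
    refine ⟨?_, ?_⟩
    · intro t ht
      have H := h t (by omega)
      rwa [snoc_lt w l t (by omega), snoc_lt w l (t+1) ht] at H
    · intro hn
      have H := h (n-1) (by omega)
      have e1 : (⟨n-1, by omega⟩ : Fin (n+1)) = (⟨n-1, by omega⟩ : Fin (n+1)) := rfl
      have h1 : (Fin.snoc w l : Fin (n+1) → Fin 4) ⟨n-1, by omega⟩ = w ⟨n-1, by omega⟩ :=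
        snoc_lt w l (n-1) (by omega)
      have h2 : (Fin.snoc w l : Fin (n+1) → Fin 4) ⟨n-1+1, by omega⟩ = l := by
        have : (⟨n-1+1, by omega⟩ : Fin (n+1)) = ⟨n, Nat.lt_succ_self n⟩ := by
          simp only [Fin.mk.injEq]; omega
        rw [this, snoc_at_n]
      rwa [h1, h2] at H
  · rintro ⟨hw, hend⟩ t ht
    by_cases hc : t + 1 < n
    · have H := hw t hc
      rwa [snoc_lt w l t (by omega), snoc_lt w l (t+1) hc]
    · have htn : t = n - 1 := by omega
      have hn : 0 < n := by omega
      have H := hend hn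
      subst htn
      have h1 : (Fin.snoc w l : Fin (n+1) → Fin 4) ⟨n-1, by omega⟩ = w ⟨n-1, Nat.sub_lt hn one_pos⟩ :=
        snoc_lt w l (n-1) (by omega)
      have h2 : (Fin.snoc w l : Fin (n+1) → Fin 4) ⟨n-1+1, by omega⟩ = l := by
        have : (⟨n-1+1, by omega⟩ : Fin (n+1)) = ⟨n, Nat.lt_succ_self n⟩ := by
          simp only [Fin.mk.injEq]; omega
        rw [this, snoc_at_n]
      rwa [h1, h2]

lemma noPat_init {n : ℕ} {w : Fin (n+1) → Fin 4} (hw : NoPat w) : NoPat (Fin.init w) := by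
  have h : NoPat (Fin.snoc (Fin.init w) (w (Fin.last n))) := by
    rw [Fin.snoc_init_self]; exact hw
  exact ((noPat_snoc _ _).1 h).1

abbrev V (n : ℕ) := {x : Fin n → Fin 4 // NoPat x}
abbrev V1 (n : ℕ) := {x : Fin (n+1) → Fin 4 // NoPat x ∧ x (Fin.last n) = 1}

def equiv1 (n : ℕ) : V1 n ≃ V n where
  toFun w := ⟨Fin.init w.1, noPat_init w.2.1⟩
  invFun w := ⟨Fin.snoc w.1 1, by
    refine ⟨(noPat_snoc _ _).2 ⟨w.2, fun hn hc => ?_⟩, Fin.snoc_last _ _⟩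
    exact absurd hc.2 (by decide)⟩
  left_inv w := Subtype.ext (by
    have := w.2.2
    conv_rhs => rw [← Fin.snoc_init_self w.1]
    rw [this])
  right_inv w := Subtype.ext (by simp)

def equiv2 (n : ℕ) : V (n+1) × Fin 4 ≃ V (n+2) ⊕ V1 n where
  toFun p :=
    if h : p.1.1 (Fin.last n) = 1 ∧ p.2 = 0 then
      .inr ⟨p.1.1, p.1.2, h.1⟩
    else
      .inl ⟨Fin.snoc p.1.1 p.2, (noPat_snoc _ _).2 ⟨p.1.2, fun _ hc => h hc⟩⟩
  invFun s :=
    match s with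
    | .inl x => (⟨Fin.init x.1, noPat_init x.2⟩, x.1 (Fin.last (n+1)))
    | .inr w => (⟨w.1, w.2.1⟩, 0)
  left_inv p := by
    by_cases h : p.1.1 (Fin.last n) = 1 ∧ p.2 = 0
    · simp only [dif_pos h]
      exact Prod.ext (Subtype.ext rfl) h.2.symm
    · simp only [dif_neg h]
      refine Prod.ext (Subtype.ext ?_) ?_
      · simp
      · simp
  right_inv s := by
    match s with
    | .inl x =>
      have hx := x.2
      have hne : ¬(Fin.init x.1 (Fin.last n) = 1 ∧ x.1 (Fin.last (n+1)) = 0) := by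
        intro hc
        have H := hx n (by omega)
        have e1 : Fin.init x.1 (Fin.last n) = x.1 ⟨n, by omega⟩ := rfl
        have e2 : x.1 (Fin.last (n+1)) = x.1 ⟨n+1, by omega⟩ := rfl
        exact H ⟨e1 ▸ hc.1, e2 ▸ hc.2⟩
      simp only [dif_neg hne]
      exact congrArg Sum.inl (Subtype.ext (Fin.snoc_init_self _))
    | .inr w =>
      have h : (w.1 : Fin (n+1) → Fin 4) (Fin.last n) = 1 ∧ (0 : Fin 4) = 0 := ⟨w.2.2, rfl⟩
      dsimp only
      rw [dif_pos h]

lemma card_V1 (n : ℕ) : Nat.card (V1 n) = Nat.card (V n) := Nat.card_congr (equiv1 n)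

lemma card_rec (n : ℕ) :
    Nat.card (V (n+1)) * 4 = Nat.card (V (n+2)) + Nat.card (V n) := by
  have h := Nat.card_congr (equiv2 n)
  rw [Nat.card_prod, Nat.card_sum, card_V1] at h
  simpa using h

lemma card_V0 : Nat.card (V 0) = 1 := by
  have h : ∀ x : Fin 0 → Fin 4, NoPat x := fun x t ht => absurd ht (by omega)
  rw [Nat.card_congr (Equiv.subtypeUnivEquiv h)]
  simp [Nat.card_eq_fintype_card]

lemma card_V1' : Nat.card (V 1) = 4 := by
  have h : ∀ x : Fin 1 → Fin 4, NoPat x := fun x t ht => absurd ht (by omega)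
  rw [Nat.card_congr (Equiv.subtypeUnivEquiv h)]
  simp [Nat.card_eq_fintype_card]

lemma cardV_eq : ∀ k : ℕ, (Nat.card (V k) : ℝ) = 4 ^ k * f k := by
  have key : ∀ k : ℕ, (Nat.card (V k) : ℝ) = 4 ^ k * f k ∧
      (Nat.card (V (k+1)) : ℝ) = 4 ^ (k+1) * f (k+1) := by
    intro k
    induction k with
    | zero => simp [card_V0, card_V1', f]
    | succ n ih =>
      refine ⟨ih.2, ?_⟩
      have h := card_rec n
      have h' : (Nat.card (V (n+2)) : ℝ) = (Nat.card (V (n+1)) : ℝ) * 4 - Nat.card (V n) := by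
        have := congrArg (fun m : ℕ => (m : ℝ)) h
        push_cast at this
        linarith
      rw [h', ih.1, ih.2, show f (n+2) = f (n+1) - (1/16) * f n from rfl]
      ring
  exact fun k => (key k).1

def equivOrig (k : ℕ) :
    {x : Fin k → Fin 4 × Bool //
        (∀ t : ℕ, ∀ h : t + 1 < k,
          ¬((x ⟨t, Nat.lt_of_succ_lt h⟩).1 = 1 ∧ (x ⟨t + 1, h⟩).1 = 0)) ∧
        (∀ t : Fin k, (x t).2 = false)} ≃ V k where
  toFun x := ⟨fun t => (x.1 t).1, x.2.1⟩
  invFun y := ⟨fun t => (y.1 t, false), y.2, fun t => rfl⟩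
  left_inv x := Subtype.ext (funext fun t => Prod.ext rfl (x.2.2 t).symm)
  right_inv y := Subtype.ext rfl

/-- The number of sequences `x : Fin k → Fin 4 × Bool` such that (a) no index `t`
(with `t+1 < k`) has `(x t).1 = 1` and `(x (t+1)).1 = 0`, and (b) `(x t).2 = false`
for every `t`, equals `4^k * f k`; equivalently, under the uniform distribution
this event has probability exactly `2^{-k} * f k`. -/
theorem stmt_5 (k : ℕ) :
    (Nat.card {x : Fin k → Fin 4 × Bool //
        (∀ t : ℕ, ∀ h : t + 1 < k,
          ¬((x ⟨t, Nat.lt_of_succ_lt h⟩).1 = 1 ∧ (x ⟨t + 1, h⟩).1 = 0)) ∧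
        (∀ t : Fin k, (x t).2 = false)} : ℝ)
      = 4 ^ k * f k := by
  rw [Nat.card_congr (equivOrig k)]
  exact cardV_eq k
end

section
/- Define f : ℕ → ℝ by f(0) = f(1) = 1 and f(k) = f(k−1) − (1/16)·f(k−2) for k ≥ 2. Let T ≥ 0, let m ≥ 1, let k_1, …, k_m ≥ 1, and let t_ℓ : Fin k_ℓ → Fin T for ℓ = 1, …, m be strictly increasing maps with pairwise disjoint ranges. Then the number of sequences x : Fin T → Fin 4 such that for every ℓ and every s with s+1 < k_ℓ it is not the case that x(t_ℓ(s)) = 1 and x(t_ℓ(s+1)) = 0, equals 4^T · ∏_{ℓ=1}^{m} f(k_ℓ). Equivalently, for a uniformly random x the events 'block ℓ avoids the pattern' are independent and the probability that all blocks avoid the pattern is ∏_{ℓ=1}^{m} f(k_ℓ). -/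
/-- No consecutive pattern (1,0). -/
def Pp (n : ℕ) (y : Fin n → Fin 4) : Prop :=
  ∀ s : ℕ, ∀ h : s + 1 < n, ¬(y ⟨s, Nat.lt_of_succ_lt h⟩ = 1 ∧ y ⟨s + 1, h⟩ = 0)

noncomputable def gcnt (n : ℕ) : ℕ := Nat.card {y : Fin n → Fin 4 // Pp n y}

lemma Pp_zero (y : Fin 0 → Fin 4) : Pp 0 y := by intro s h; omega

lemma Pp_one (y : Fin 1 → Fin 4) : Pp 1 y := by intro s h; omega

lemma gcnt_zero : gcnt 0 = 1 := by
  rw [gcnt, Nat.card_congr (Equiv.subtypeUnivEquiv Pp_zero)]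
  simp [Nat.card_fun]

lemma gcnt_one : gcnt 1 = 4 := by
  rw [gcnt, Nat.card_congr (Equiv.subtypeUnivEquiv Pp_one)]
  simp [Nat.card_fun]

lemma cons_mk_succ {n : ℕ} (c : Fin 4) (z : Fin n → Fin 4) (s : ℕ) (h : s + 1 < n + 1) :
    Fin.cons (α := fun _ => Fin 4) c z ⟨s + 1, h⟩ = z ⟨s, Nat.lt_of_succ_lt_succ h⟩ := by
  rw [show (⟨s+1, h⟩ : Fin (n+1)) = Fin.succ ⟨s, Nat.lt_of_succ_lt_succ h⟩ from Fin.ext rfl,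
    Fin.cons_succ]

lemma cons_mk_zero {n : ℕ} (c : Fin 4) (z : Fin n → Fin 4) (h : 0 < n + 1) :
    Fin.cons (α := fun _ => Fin 4) c z ⟨0, h⟩ = c := rfl

lemma Pp_cons (n : ℕ) (c : Fin 4) (z : Fin n → Fin 4) :
    Pp (n + 1) (Fin.cons c z) ↔ Pp n z ∧ ∀ h : 0 < n, ¬(c = 1 ∧ z ⟨0, h⟩ = 0) := by
  constructor
  · intro H
    refine ⟨fun s h => ?_, fun h => ?_⟩
    · have := H (s + 1) (Nat.succ_lt_succ h)
      rwa [cons_mk_succ, cons_mk_succ] at this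
    · have := H 0 (Nat.succ_lt_succ h)
      rwa [cons_mk_zero, cons_mk_succ] at this
  · rintro ⟨H1, H2⟩ s h
    match s with
    | 0 =>
      rw [cons_mk_zero, cons_mk_succ]
      exact H2 (by omega)
    | s + 1 =>
      rw [cons_mk_succ, cons_mk_succ]
      exact H1 s (by omega)

open Classical in
noncomputable def splitE {α : Type*} (P Q : α → Prop) :
    {w : α // P w ∧ Q w} ⊕ {w : α // P w ∧ ¬Q w} ≃ {w : α // P w} where
  toFun := Sum.elim (fun w => ⟨w.1, w.2.1⟩) (fun w => ⟨w.1, w.2.1⟩)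
  invFun w := if h : Q w.1 then Sum.inl ⟨w.1, w.2, h⟩ else Sum.inr ⟨w.1, w.2, h⟩
  left_inv := by rintro (⟨w, hw, hq⟩ | ⟨w, hw, hq⟩) <;> simp [hq]
  right_inv := by intro w; by_cases h : Q w.1 <;> simp [h]

def prodE1 {β : Type*} (C D : β → Prop) :
    {p : Fin 4 × β // (C p.2 ∧ ¬(p.1 = 1 ∧ D p.2)) ∧ D p.2} ≃
      {c : Fin 4 // c ≠ 1} × {z : β // C z ∧ D z} where
  toFun p := (⟨p.1.1, fun e => p.2.1.2 ⟨e, p.2.2⟩⟩, ⟨p.1.2, p.2.1.1, p.2.2⟩)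
  invFun q := ⟨(q.1.1, q.2.1), ⟨⟨q.2.2.1, fun h => q.1.2 h.1⟩, q.2.2.2⟩⟩
  left_inv p := rfl
  right_inv q := rfl

def prodE2 {β : Type*} (C D : β → Prop) :
    {p : Fin 4 × β // (C p.2 ∧ ¬(p.1 = 1 ∧ D p.2)) ∧ ¬D p.2} ≃
      Fin 4 × {z : β // C z ∧ ¬D z} where
  toFun p := (p.1.1, ⟨p.1.2, p.2.1.1, p.2.2⟩)
  invFun q := ⟨(q.1, q.2.1), ⟨⟨q.2.2.1, fun h => q.2.2.2 h.2⟩, q.2.2.2⟩⟩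
  left_inv p := rfl
  right_inv q := rfl

lemma card_ne_one : Nat.card {c : Fin 4 // c ≠ 1} = 3 := by
  rw [Nat.card_eq_fintype_card]; decide

/-- tail equivalence: sequences starting with 0. -/
noncomputable def zeroEquiv (n : ℕ) :
    {z : Fin (n + 1) → Fin 4 // Pp (n + 1) z ∧ z ⟨0, Nat.succ_pos n⟩ = 0} ≃
      {w : Fin n → Fin 4 // Pp n w} where
  toFun z := ⟨Fin.tail z.1, fun s h => z.2.1 (s + 1) (Nat.succ_lt_succ h)⟩
  invFun w := ⟨Fin.cons 0 w.1,
    (Pp_cons n 0 w.1).2 ⟨w.2, fun h hc => by exact absurd hc.1 (by decide)⟩,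
    cons_mk_zero 0 w.1 (Nat.succ_pos n)⟩
  left_inv z := by
    apply Subtype.ext
    have h0 : z.1 0 = 0 := z.2.2
    calc Fin.cons 0 (Fin.tail z.1) = Fin.cons (z.1 0) (Fin.tail z.1) := by rw [h0]
    _ = z.1 := Fin.cons_self_tail z.1
  right_inv w := Subtype.ext (Fin.tail_cons (α := fun _ => Fin 4) 0 w.1)

noncomputable def consSubtypeEquiv (n : ℕ) :
    {p : Fin 4 × (Fin n → Fin 4) //
        Pp n p.2 ∧ ∀ h : 0 < n, ¬(p.1 = 1 ∧ p.2 ⟨0, h⟩ = 0)} ≃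
      {y : Fin (n + 1) → Fin 4 // Pp (n + 1) y} :=
  (Fin.consEquiv fun _ => Fin 4).subtypeEquiv fun p => by
    exact ((Pp_cons n p.1 p.2).trans (Iff.rfl)).symm

noncomputable def acnt (n : ℕ) : ℕ :=
  Nat.card {z : Fin (n + 1) → Fin 4 // Pp (n + 1) z ∧ ¬ z ⟨0, Nat.succ_pos n⟩ = 0}

lemma gcnt_split (n : ℕ) : gcnt (n + 1) = gcnt n + acnt n := by
  rw [gcnt, ← Nat.card_congr (splitE (Pp (n + 1)) (fun z => z ⟨0, Nat.succ_pos n⟩ = 0)),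
    Nat.card_sum, Nat.card_congr (zeroEquiv n), acnt, gcnt]

lemma gcnt_rec (n : ℕ) : gcnt (n + 2) + gcnt n = 4 * gcnt (n + 1) := by
  have h1 : gcnt (n + 2) = 3 * gcnt n + 4 * acnt n := by
    rw [gcnt, ← Nat.card_congr (consSubtypeEquiv (n + 1))]
    have e0 : {p : Fin 4 × (Fin (n+1) → Fin 4) //
        Pp (n+1) p.2 ∧ ∀ h : 0 < n + 1, ¬(p.1 = 1 ∧ p.2 ⟨0, h⟩ = 0)} ≃
        {p : Fin 4 × (Fin (n+1) → Fin 4) //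
        Pp (n+1) p.2 ∧ ¬(p.1 = 1 ∧ p.2 ⟨0, Nat.succ_pos n⟩ = 0)} :=
      Equiv.subtypeEquivRight fun p => by
        constructor
        · rintro ⟨h1, h2⟩; exact ⟨h1, h2 (Nat.succ_pos n)⟩
        · rintro ⟨h1, h2⟩; exact ⟨h1, fun _ => h2⟩
    rw [Nat.card_congr e0,
      ← Nat.card_congr (splitE
        (fun p : Fin 4 × (Fin (n+1) → Fin 4) =>
          Pp (n+1) p.2 ∧ ¬(p.1 = 1 ∧ p.2 ⟨0, Nat.succ_pos n⟩ = 0))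
        (fun p => p.2 ⟨0, Nat.succ_pos n⟩ = 0)),
      Nat.card_sum,
      Nat.card_congr (prodE1 (Pp (n+1)) (fun z : Fin (n+1) → Fin 4 => z ⟨0, Nat.succ_pos n⟩ = 0)),
      Nat.card_congr (prodE2 (Pp (n+1)) (fun z : Fin (n+1) → Fin 4 => z ⟨0, Nat.succ_pos n⟩ = 0)),
      Nat.card_prod, Nat.card_prod, card_ne_one,
      Nat.card_congr (zeroEquiv n), ← gcnt, ← acnt, Nat.card_eq_fintype_card (α := Fin 4),
      Fintype.card_fin]
  have h2 := gcnt_split n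
  have h3 := gcnt_split (n + 1)
  omega

lemma gcnt_eq (n : ℕ) : (gcnt n : ℝ) = 4 ^ n * f n := by
  induction n using Nat.strong_induction_on with
  | _ n ih =>
    match n with
    | 0 => simp [gcnt_zero, f]
    | 1 => norm_num [gcnt_one, f]
    | n + 2 =>
      have h1 := gcnt_rec n
      have h2 : (gcnt (n + 2) : ℝ) = 4 * (gcnt (n + 1) : ℝ) - (gcnt n : ℝ) := by
        have : ((gcnt (n + 2) + gcnt n : ℕ) : ℝ) = ((4 * gcnt (n + 1) : ℕ) : ℝ) := by
          rw [h1]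
        push_cast at this
        linarith
      rw [h2, ih (n + 1) (by omega), ih n (by omega), show f (n + 2) = f (n + 1) - (1/16) * f n from rfl]
      ring

section blocks
variable {T m : ℕ} {k : Fin m → ℕ} (t : ∀ ℓ : Fin m, Fin (k ℓ) → Fin T)
  (hφ : Function.Injective (fun p : (ℓ : Fin m) × Fin (k ℓ) => t p.1 p.2))

noncomputable def xinv
    (yz : (∀ ℓ, {y : Fin (k ℓ) → Fin 4 // Pp (k ℓ) y}) ×
      ({j : Fin T // j ∉ Set.range (fun p : (ℓ : Fin m) × Fin (k ℓ) => t p.1 p.2)} → Fin 4)) :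
    Fin T → Fin 4 := fun j =>
  if h : j ∈ Set.range (fun p : (ℓ : Fin m) × Fin (k ℓ) => t p.1 p.2) then
    (yz.1 ((Equiv.ofInjective _ hφ).symm ⟨j, h⟩).1).1
      ((Equiv.ofInjective _ hφ).symm ⟨j, h⟩).2
  else yz.2 ⟨j, h⟩

lemma xinv_mem (yz) (p : (ℓ : Fin m) × Fin (k ℓ)) :
    xinv t hφ yz (t p.1 p.2) = (yz.1 p.1).1 p.2 := by
  have hmem : t p.1 p.2 ∈ Set.range (fun p : (ℓ : Fin m) × Fin (k ℓ) => t p.1 p.2) := ⟨p, rfl⟩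
  rw [xinv, dif_pos hmem]
  have hsymm : (Equiv.ofInjective _ hφ).symm ⟨t p.1 p.2, hmem⟩ = p :=
    Equiv.ofInjective_symm_apply hφ p
  rw [hsymm]

lemma xinv_notmem (yz) (j : Fin T)
    (h : j ∉ Set.range (fun p : (ℓ : Fin m) × Fin (k ℓ) => t p.1 p.2)) :
    xinv t hφ yz j = yz.2 ⟨j, h⟩ := dif_neg h

set_option maxHeartbeats 1000000 in
noncomputable def blockEquiv :
    {x : Fin T → Fin 4 // ∀ ℓ, Pp (k ℓ) (fun i => x (t ℓ i))} ≃
      (∀ ℓ, {y : Fin (k ℓ) → Fin 4 // Pp (k ℓ) y}) ×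
        ({j : Fin T // j ∉ Set.range (fun p : (ℓ : Fin m) × Fin (k ℓ) => t p.1 p.2)} → Fin 4) where
  toFun x := (fun ℓ => ⟨fun i => x.1 (t ℓ i), x.2 ℓ⟩, fun j => x.1 j.1)
  invFun yz := ⟨xinv t hφ yz, by
    intro ℓ
    have : (fun i => xinv t hφ yz (t ℓ i)) = (yz.1 ℓ).1 :=
      funext fun i => xinv_mem t hφ yz ⟨ℓ, i⟩
    rw [this]
    exact (yz.1 ℓ).2⟩
  left_inv := by
    intro x
    apply Subtype.ext
    funext j
    by_cases h : j ∈ Set.range (fun p : (ℓ : Fin m) × Fin (k ℓ) => t p.1 p.2)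
    · obtain ⟨p, hp⟩ := h
      have : (fun p : (ℓ : Fin m) × Fin (k ℓ) => t p.1 p.2) p = t p.1 p.2 := rfl
      rw [this] at hp
      subst hp
      exact xinv_mem t hφ _ p
    · exact xinv_notmem t hφ _ j h
  right_inv := by
    intro yz
    refine Prod.ext ?_ ?_
    · funext ℓ
      apply Subtype.ext
      show (fun i => xinv t hφ yz (t ℓ i)) = (yz.1 ℓ).1
      exact funext fun i => xinv_mem t hφ yz ⟨ℓ, i⟩
    · funext j
      show xinv t hφ yz j.1 = yz.2 j
      rw [xinv_notmem t hφ yz j.1 j.2]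
end blocks

/-- For strictly increasing blocks `t ℓ : Fin (k ℓ) → Fin T` with pairwise
disjoint ranges, the number of sequences `x : Fin T → Fin 4` such that no block
contains the consecutive pattern `(1, 0)` equals `4^T * ∏ ℓ, f (k ℓ)`;
equivalently, for a uniformly random `x` the blockwise pattern-avoidance events
are independent and all hold simultaneously with probability `∏ ℓ, f (k ℓ)`. -/
theorem stmt_6 (T : ℕ) (m : ℕ) (hm : 1 ≤ m)
    (k : Fin m → ℕ) (hk : ∀ ℓ, 1 ≤ k ℓ)
    (t : ∀ ℓ : Fin m, Fin (k ℓ) → Fin T)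
    (hmono : ∀ ℓ, StrictMono (t ℓ))
    (hdisj : ∀ ℓ ℓ', ℓ ≠ ℓ' → Disjoint (Set.range (t ℓ)) (Set.range (t ℓ'))) :
    (Nat.card {x : Fin T → Fin 4 //
        ∀ ℓ : Fin m, ∀ s : ℕ, ∀ h : s + 1 < k ℓ,
          ¬(x (t ℓ ⟨s, Nat.lt_of_succ_lt h⟩) = 1 ∧ x (t ℓ ⟨s + 1, h⟩) = 0)} : ℝ)
      = 4 ^ T * ∏ ℓ : Fin m, f (k ℓ) := by
  classical
  have hφ : Function.Injective (fun p : (ℓ : Fin m) × Fin (k ℓ) => t p.1 p.2) := by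
    rintro ⟨ℓ, i⟩ ⟨ℓ', j⟩ h
    simp only at h
    by_cases e : ℓ = ℓ'
    · subst e
      cases (hmono ℓ).injective h
      rfl
    · exact absurd ⟨j, h.symm⟩ (Set.disjoint_left.mp (hdisj ℓ ℓ' e) ⟨i, rfl⟩)
  have key : Nat.card {x : Fin T → Fin 4 // ∀ ℓ, Pp (k ℓ) (fun i => x (t ℓ i))}
      = (∏ ℓ : Fin m, gcnt (k ℓ)) * 4 ^ Nat.card
        {j : Fin T // j ∉ Set.range (fun p : (ℓ : Fin m) × Fin (k ℓ) => t p.1 p.2)} := by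
    rw [Nat.card_congr (blockEquiv t hφ), Nat.card_prod, Nat.card_pi, Nat.card_fun,
      Nat.card_eq_fintype_card (α := Fin 4), Fintype.card_fin]
    rfl
  have hsum : Nat.card {j : Fin T // j ∉ Set.range
        (fun p : (ℓ : Fin m) × Fin (k ℓ) => t p.1 p.2)} + ∑ ℓ : Fin m, k ℓ = T := by
    have e1 : Nat.card {j : Fin T // j ∈ Set.range
        (fun p : (ℓ : Fin m) × Fin (k ℓ) => t p.1 p.2)} = ∑ ℓ : Fin m, k ℓ := by
      calc Nat.card {j : Fin T // j ∈ Set.range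
            (fun p : (ℓ : Fin m) × Fin (k ℓ) => t p.1 p.2)}
          = Nat.card ((ℓ : Fin m) × Fin (k ℓ)) :=
            Nat.card_congr (Equiv.ofInjective _ hφ).symm
        _ = ∑ ℓ : Fin m, k ℓ := by
            rw [Nat.card_eq_fintype_card, Fintype.card_sigma]
            simp
    have e2 : Nat.card {j : Fin T // j ∈ Set.range
          (fun p : (ℓ : Fin m) × Fin (k ℓ) => t p.1 p.2)} +
        Nat.card {j : Fin T // j ∉ Set.range
          (fun p : (ℓ : Fin m) × Fin (k ℓ) => t p.1 p.2)} = T := by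
      rw [← Nat.card_sum, Nat.card_congr (Equiv.sumCompl _), Nat.card_eq_fintype_card,
        Fintype.card_fin]
    rw [← e1, Nat.add_comm]
    exact e2
  have key2 : Nat.card {x : Fin T → Fin 4 //
      ∀ ℓ : Fin m, ∀ s : ℕ, ∀ h : s + 1 < k ℓ,
        ¬(x (t ℓ ⟨s, Nat.lt_of_succ_lt h⟩) = 1 ∧ x (t ℓ ⟨s + 1, h⟩) = 0)}
      = Nat.card {x : Fin T → Fin 4 // ∀ ℓ, Pp (k ℓ) (fun i => x (t ℓ i))} := rfl
  have hpow : (4:ℝ) ^ T = 4 ^ Nat.card {j : Fin T // j ∉ Set.range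
      (fun p : (ℓ : Fin m) × Fin (k ℓ) => t p.1 p.2)} * 4 ^ ∑ ℓ : Fin m, k ℓ := by
    rw [← pow_add, hsum]
  rw [key2, key]
  push_cast
  rw [Finset.prod_congr rfl (fun ℓ _ => gcnt_eq (k ℓ)), Finset.prod_mul_distrib,
    Finset.prod_pow_eq_pow_sum, hpow]
  ring
end

section
/- Let f, a, b : ℕ → ℝ be sequences with f(0) = f(1) = 1 such that for every k ≥ 1: f(k) = a(k) + b(k), a(k) = (1/4)·f(k−1), and b(k) = (1/4)·b(k−1) + (1/2)·f(k−1). Then for every k ≥ 2, f(k) = f(k−1) − (1/16)·f(k−2). -/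
/-- Eliminating `a` and `b` from the relations `f k = a k + b k`,
`a k = (1/4) f (k-1)`, and `b k = (1/4) b (k-1) + (1/2) f (k-1)` (for `k ≥ 1`)
yields the second-order recurrence `f k = f (k-1) - (1/16) f (k-2)` for `k ≥ 2`. -/
theorem stmt_7 (f a b : ℕ → ℝ)
    (hf0 : f 0 = 1) (hf1 : f 1 = 1)
    (hfab : ∀ k, 1 ≤ k → f k = a k + b k)
    (ha : ∀ k, 1 ≤ k → a k = (1 / 4) * f (k - 1))
    (hb : ∀ k, 1 ≤ k → b k = (1 / 4) * b (k - 1) + (1 / 2) * f (k - 1)) :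
    ∀ k, 2 ≤ k → f k = f (k - 1) - (1 / 16) * f (k - 2) := by
  intro k hk
  have h1 : 1 ≤ k := by omega
  have h1' : 1 ≤ k - 1 := by omega
  have hkk : k - 1 - 1 = k - 2 := by omega
  have hbprev : b (k - 1) = f (k - 1) - (1 / 4) * f (k - 2) := by
    have := hfab (k - 1) h1'
    have := ha (k - 1) h1'
    rw [hkk] at this
    linarith [hfab (k - 1) h1']
  have := hfab k h1
  have := ha k h1
  have hbk := hb k h1
  rw [hbprev] at hbk
  linarith
end

section
/- Define f : ℕ → ℝ by f(0) = f(1) = 1 and f(k) = f(k−1) − (1/16)·f(k−2) for k ≥ 2, and let Γ = 0.505. There exist nonnegative sequences Δα, β : ℕ → ℝ such that for every k ≥ 0: (1) Δα(k) + (1/2)·β(k) ≤ 2^{−k}·f(k) − 2^{−k−1}·f(k+1); (2) ∑_{ℓ=0}^{k−1} Δα(ℓ) + β(k) ≥ Γ; and (3) β(k) ≥ β(k+1). -/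
noncomputable def myβ : ℕ → ℝ := fun k =>
  match k with
  | 0 => 101/200
  | 1 => 103/400
  | 2 => 193/1600
  | 3 => 179/3200
  | 4 => 2617/102400
  | 5 => 569/51200
  | 6 => 26023/6553600
  | 7 => 419/13107200
  | _ => 0

noncomputable def myΔα : ℕ → ℝ := fun k =>
  (1 / 2 : ℝ) ^ k * f k - (1 / 2 : ℝ) ^ (k + 1) * f (k + 1) - (1 / 2) * myβ k

lemma f0 : f 0 = 1 := rfl
lemma f1 : f 1 = 1 := rfl
lemma f2 : f 2 = 15/16 := by show f 1 - (1/16) * f 0 = _; rw [f0, f1]; norm_num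
lemma f3 : f 3 = 7/8 := by show f 2 - (1/16) * f 1 = _; rw [f1, f2]; norm_num
lemma f4 : f 4 = 209/256 := by show f 3 - (1/16) * f 2 = _; rw [f2, f3]; norm_num
lemma f5 : f 5 = 195/256 := by show f 4 - (1/16) * f 3 = _; rw [f3, f4]; norm_num
lemma f6 : f 6 = 2911/4096 := by show f 5 - (1/16) * f 4 = _; rw [f4, f5]; norm_num
lemma f7 : f 7 = 679/1024 := by show f 6 - (1/16) * f 5 = _; rw [f5, f6]; norm_num
lemma f8 : f 8 = 40545/65536 := by show f 7 - (1/16) * f 6 = _; rw [f6, f7]; norm_num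

/-- Basic shape of `f`: positive, nonincreasing, at most halving. -/
lemma f_shape : ∀ k, 0 < f k ∧ f (k + 1) ≤ f k ∧ f k ≤ 2 * f (k + 1) := by
  intro k
  induction k with
  | zero => refine ⟨by norm_num [f0], ?_, ?_⟩ <;> rw [f0, f1] <;> norm_num
  | succ n ih =>
    obtain ⟨h1, h2, h3⟩ := ih
    have hpos : 0 < f (n + 1) := by linarith
    have hrec : f (n + 2) = f (n + 1) - (1/16) * f n := rfl
    refine ⟨hpos, by rw [hrec]; linarith, by rw [hrec]; linarith⟩

lemma f_pos (k : ℕ) : 0 < f k := (f_shape k).1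

lemma f_le_one (k : ℕ) : f k ≤ 1 := by
  induction k with
  | zero => rw [f0]
  | succ n ih => exact le_trans (f_shape n).2.1 ih

lemma β_nonneg (k : ℕ) : 0 ≤ myβ k := by
  match k with
  | 0 | 1 | 2 | 3 | 4 | 5 | 6 | 7 => norm_num [myβ]
  | (n+8) => simp [myβ]

lemma β_zero (k : ℕ) (hk : 8 ≤ k) : myβ k = 0 := by
  match k, hk with
  | (n+8), _ => simp [myβ]

lemma β_mono (k : ℕ) : myβ (k + 1) ≤ myβ k := by
  match k with
  | 0 | 1 | 2 | 3 | 4 | 5 | 6 | 7 => norm_num [myβ]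
  | (n+8) => simp [myβ]

lemma Δα_nonneg (k : ℕ) : 0 ≤ myΔα k := by
  match k with
  | 0 => simp only [myΔα, myβ]; rw [f0, f1]; norm_num
  | 1 => simp only [myΔα, myβ]; rw [f1, f2]; norm_num
  | 2 => simp only [myΔα, myβ]; rw [f2, f3]; norm_num
  | 3 => simp only [myΔα, myβ]; rw [f3, f4]; norm_num
  | 4 => simp only [myΔα, myβ]; rw [f4, f5]; norm_num
  | 5 => simp only [myΔα, myβ]; rw [f5, f6]; norm_num
  | 6 => simp only [myΔα, myβ]; rw [f6, f7]; norm_num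
  | 7 => simp only [myΔα, myβ]; rw [f7, f8]; norm_num
  | (n+8) =>
    have hβ : myβ (n + 8) = 0 := β_zero _ (by omega)
    have h2 := (f_shape (n + 8)).2.1
    have h3 := f_pos (n + 8)
    simp only [myΔα, hβ]
    have : (1 / 2 : ℝ) ^ (n + 8 + 1) * f (n + 8 + 1) ≤ (1 / 2 : ℝ) ^ (n + 8) * f (n + 8) := by
      rw [pow_succ]
      nlinarith [pow_pos (by norm_num : (0:ℝ) < 1/2) (n+8)]
    linarith

/-- Telescoping sum identity. -/
lemma sum_Δα (k : ℕ) :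
    (∑ ℓ ∈ Finset.range k, myΔα ℓ) =
      1 - (1 / 2 : ℝ) ^ k * f k - (1 / 2) * ∑ ℓ ∈ Finset.range k, myβ ℓ := by
  induction k with
  | zero => simp [f0]
  | succ n ih =>
    rw [Finset.sum_range_succ, Finset.sum_range_succ, ih, myΔα]
    ring

lemma sum_β_eight : (∑ ℓ ∈ Finset.range 8, myβ ℓ) = 2568317/2621440 := by
  simp [Finset.sum_range_succ, myβ]
  norm_num

lemma sum_β_tail (k : ℕ) (hk : 8 ≤ k) :
    (∑ ℓ ∈ Finset.range k, myβ ℓ) = 2568317/2621440 := by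
  rw [← sum_β_eight]
  symm
  apply Finset.sum_subset
  · exact Finset.range_subset_range.mpr hk
  · intro x _ hx
    simp only [Finset.mem_range, not_lt] at hx
    exact β_zero x hx

lemma constraint2 (k : ℕ) :
    (0.505 : ℝ) ≤ (∑ ℓ ∈ Finset.range k, myΔα ℓ) + myβ k := by
  rw [sum_Δα]
  match k with
  | 0 => simp [myβ, f0]; norm_num
  | 1 => rw [Finset.sum_range_succ]; simp only [Finset.range_zero, Finset.sum_empty, myβ]
         rw [f1]; norm_num
  | 2 => simp only [Finset.sum_range_succ, Finset.range_zero, Finset.sum_empty, myβ]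
         rw [f2]; norm_num
  | 3 => simp only [Finset.sum_range_succ, Finset.range_zero, Finset.sum_empty, myβ]
         rw [f3]; norm_num
  | 4 => simp only [Finset.sum_range_succ, Finset.range_zero, Finset.sum_empty, myβ]
         rw [f4]; norm_num
  | 5 => simp only [Finset.sum_range_succ, Finset.range_zero, Finset.sum_empty, myβ]
         rw [f5]; norm_num
  | 6 => simp only [Finset.sum_range_succ, Finset.range_zero, Finset.sum_empty, myβ]
         rw [f6]; norm_num
  | 7 => simp only [Finset.sum_range_succ, Finset.range_zero, Finset.sum_empty, myβ]
         rw [f7]; norm_num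
  | (n+8) =>
    have hβ : myβ (n + 8) = 0 := β_zero _ (by omega)
    have hsum : (∑ ℓ ∈ Finset.range (n + 8), myβ ℓ) = 2568317/2621440 :=
      sum_β_tail _ (by omega)
    have hfk : (1 / 2 : ℝ) ^ (n + 8) * f (n + 8) ≤ (1 / 2 : ℝ) ^ 8 := by
      have h1 : (1 / 2 : ℝ) ^ (n + 8) * f (n + 8) ≤ (1 / 2 : ℝ) ^ (n + 8) :=
        mul_le_of_le_one_right (by positivity) (f_le_one _)
      have h2 : (1 / 2 : ℝ) ^ (n + 8) ≤ (1 / 2 : ℝ) ^ 8 :=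
        pow_le_pow_of_le_one (by norm_num) (by norm_num) (by omega)
      linarith
    rw [hβ, hsum]
    norm_num at hfk ⊢
    linarith

/-- LP feasibility for `Γ = 0.505`: there exist nonnegative sequences `Δα, β`
satisfying the gain-splitting constraint, approximate dual feasibility up to
factor `Γ`, and monotonicity of `β`. -/
theorem stmt_9 :
    ∃ Δα β : ℕ → ℝ,
      (∀ k, 0 ≤ Δα k) ∧ (∀ k, 0 ≤ β k) ∧
      (∀ k : ℕ,
        Δα k + (1 / 2) * β k ≤ (1 / 2 : ℝ) ^ k * f k - (1 / 2 : ℝ) ^ (k + 1) * f (k + 1)) ∧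
      (∀ k : ℕ, (0.505 : ℝ) ≤ (∑ ℓ ∈ Finset.range k, Δα ℓ) + β k) ∧
      (∀ k : ℕ, β (k + 1) ≤ β k) := by
  exact ⟨myΔα, myβ, Δα_nonneg, β_nonneg, fun k => le_of_eq (by rw [myΔα]; ring),
    constraint2, β_mono⟩
end

section
/- Define f : ℕ → ℝ by f(0) = f(1) = 1 and f(k) = f(k−1) − (1/16)·f(k−2) for k ≥ 2. Let Δα, β : ℕ → ℝ be nonnegative sequences such that for every k ≥ 0: Δα(k) + (1/2)·β(k) ≤ 2^{−k}·f(k) − 2^{−k−1}·f(k+1) and β(k) ≥ β(k+1). If Δα is summable, then for every k ≥ 0: ∑_{ℓ=0}^{∞} Δα(k+ℓ) + β(k+1) ≤ 2^{−k}·f(k). -/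
lemma f_pos_aux : ∀ k : ℕ, 0 ≤ f k ∧ f k ≤ 2 * f (k + 1) := by
  intro k
  induction k with
  | zero => norm_num [f]
  | succ n ih =>
    obtain ⟨h0, h1⟩ := ih
    have hf1 : 0 ≤ f (n + 1) := by linarith
    constructor
    · exact hf1
    · show f (n + 1) ≤ 2 * f (n + 2)
      have : f (n + 2) = f (n + 1) - (1 / 16) * f n := rfl
      rw [this]; linarith

lemma f_nonneg (k : ℕ) : 0 ≤ f k := (f_pos_aux k).1

lemma g_nonneg (k : ℕ) : 0 ≤ (1 / 2 : ℝ) ^ k * f k :=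
  mul_nonneg (by positivity) (f_nonneg k)

/-- In a deterministic round matching an offline vertex with `k` prior
randomized rounds, the total dual increase `∑_{ℓ≥k} Δα ℓ + β (k+1)` does not
exceed the primal gain `2^{-k} f k`. -/
theorem stmt_12 (Δα β : ℕ → ℝ)
    (hαnn : ∀ k, 0 ≤ Δα k) (hβnn : ∀ k, 0 ≤ β k)
    (hgain : ∀ k : ℕ,
      Δα k + (1 / 2) * β k ≤ (1 / 2 : ℝ) ^ k * f k - (1 / 2 : ℝ) ^ (k + 1) * f (k + 1))
    (hmono : ∀ k : ℕ, β (k + 1) ≤ β k)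
    (hsum : Summable Δα) :
    ∀ k : ℕ, (∑' ℓ : ℕ, Δα (k + ℓ)) + β (k + 1) ≤ (1 / 2 : ℝ) ^ k * f k := by
  intro k
  set g : ℕ → ℝ := fun j => (1 / 2 : ℝ) ^ j * f j with hg
  -- telescoping bound on partial sums
  have htel : ∀ N : ℕ, ∑ ℓ ∈ Finset.range N, (Δα (k + ℓ) + (1 / 2) * β (k + ℓ))
      ≤ g k - g (k + N) := by
    intro N
    induction N with
    | zero => simp
    | succ n ih =>
      rw [Finset.sum_range_succ]
      have := hgain (k + n)
      have : Δα (k + n) + (1 / 2) * β (k + n) ≤ g (k + n) - g (k + n + 1) := by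
        simpa [hg] using hgain (k + n)
      have hrw : k + (n + 1) = k + n + 1 := by ring
      rw [hrw]
      linarith
  rw [← sub_nonneg, show g k - ((∑' ℓ : ℕ, Δα (k + ℓ)) + β (k + 1)) =
    (g k - β (k + 1)) - ∑' ℓ : ℕ, Δα (k + ℓ) by ring, sub_nonneg]
  apply Summable.tsum_le_of_sum_range_le (hsum.comp_injective (add_right_injective k))
  intro n
  show ∑ ℓ ∈ Finset.range n, Δα (k + ℓ) ≤ g k - β (k + 1)
  have hsub : ∑ ℓ ∈ Finset.range n, Δα (k + ℓ) ≤ ∑ ℓ ∈ Finset.range (n + 2), Δα (k + ℓ) :=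
    Finset.sum_le_sum_of_subset_of_nonneg
      (Finset.range_subset_range.2 (by omega)) (fun i _ _ => hαnn (k + i))
  have hβ : β (k + 1) ≤ ∑ ℓ ∈ Finset.range (n + 2), (1 / 2) * β (k + ℓ) := by
    have h01 : ({0, 1} : Finset ℕ) ⊆ Finset.range (n + 2) := by
      intro i hi; simp at hi; rcases hi with h | h <;> simp [h]
    have hle : ∑ ℓ ∈ ({0, 1} : Finset ℕ), (1 / 2) * β (k + ℓ)
        ≤ ∑ ℓ ∈ Finset.range (n + 2), (1 / 2) * β (k + ℓ) :=
      Finset.sum_le_sum_of_subset_of_nonneg h01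
        (fun i _ _ => mul_nonneg (by norm_num) (hβnn (k + i)))
    have hs : ∑ ℓ ∈ ({0, 1} : Finset ℕ), (1 / 2 : ℝ) * β (k + ℓ)
        = (1 / 2) * β k + (1 / 2) * β (k + 1) := by
      simp [Finset.sum_pair]
    have := hmono k
    linarith
  have htot := htel (n + 2)
  rw [Finset.sum_add_distrib] at htot
  have hgN : 0 ≤ g (k + (n + 2)) := g_nonneg _
  linarith
end
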